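/- arXiv:2108.03234 — 8 statements merged into one kernel-verified Lean document; each statement's English description precedes it below -/
import Mathlib

section
/- Let W ∈ ℝ^{N×N} be the adjacency matrix of a signed graph (w_ii = 0, w_ij·w_ji ≥ 0 for all i,j) with signed Laplacian L. Then 0 is an eigenvalue of L if and only if the signed graph contains an in-isolated structurally balanced subgraph, i.e., a nonempty subset S ⊆ {1,…,N} such that w_ij = 0 for every i ∈ S and j ∉ S, and the restricted matrix (w_ij)_{i,j∈S} is structurally balanced. -/
open Matrix

/-- `0` is an eigenvalue of the signed Laplacian `L` of a signed graph iff the graph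
contains an in-isolated structurally balanced subgraph. -/
theorem stmt3 {N : ℕ}
    (W : Matrix (Fin N) (Fin N) ℝ)
    (hWdiag : ∀ i, W i i = 0)
    (hWsgn : ∀ i j, 0 ≤ W i j * W j i)
    (L : Matrix (Fin N) (Fin N) ℝ)
    (hL : ∀ i j, L i j = if i = j then ∑ k, |W i k| else -W i j) :
    (0 : ℝ) ∈ spectrum ℝ L ↔
      ∃ S : Finset (Fin N), S.Nonempty ∧
        (∀ i ∈ S, ∀ j ∉ S, W i j = 0) ∧
        ∃ d : Fin N → ℝ, (∀ i ∈ S, d i = 1 ∨ d i = -1) ∧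
          ∀ i ∈ S, ∀ j ∈ S, 0 ≤ d i * W i j * d j := by
  classical
  -- Pointwise description of L as "diagonal minus W"
  have hLpt : ∀ i k, L i k = (if k = i then ∑ j, |W i j| else 0) - W i k := by
    intro i k
    rw [hL]
    by_cases h : i = k
    · subst h; simp [hWdiag]
    · simp [h, Ne.symm h]
  -- 0 ∈ spectrum ↔ det L = 0
  have hspec : (0 : ℝ) ∈ spectrum ℝ L ↔ L.det = 0 := by
    rw [spectrum.mem_iff, map_zero, zero_sub, IsUnit.neg_iff,
      Matrix.isUnit_iff_isUnit_det, isUnit_iff_ne_zero, ne_eq, not_not]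
  rw [hspec, ← Matrix.exists_mulVec_eq_zero_iff]
  -- row expansion
  have hrow : ∀ (u : Fin N → ℝ) i,
      L.mulVec u i = (∑ k, |W i k|) * u i - ∑ k, W i k * u k := by
    intro u i
    simp only [Matrix.mulVec, dotProduct]
    rw [Finset.sum_congr rfl (fun k _ => by rw [hLpt i k, sub_mul])]
    rw [Finset.sum_sub_distrib]
    congr 1
    simp only [ite_mul, zero_mul, Finset.sum_ite_eq', Finset.mem_univ, if_true]
  constructor
  · rintro ⟨v, hv, hvk⟩
    obtain ⟨j₀, hj₀⟩ : ∃ j, v j ≠ 0 := by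
      by_contra h
      push_neg at h
      exact hv (funext h)
    haveI : Nonempty (Fin N) := ⟨j₀⟩
    obtain ⟨i₀, hmax⟩ := Finite.exists_max (fun i => |v i|)
    set m := |v i₀| with hmdef
    have hm : 0 < m := lt_of_lt_of_le (abs_pos.mpr hj₀) (hmax j₀)
    set S : Finset (Fin N) := Finset.univ.filter (fun i => |v i| = m) with hSdef
    have hmemS : ∀ i, i ∈ S ↔ |v i| = m := by
      intro i; simp [hSdef]
    -- key identity on rows indexed by S
    have hkey : ∀ i ∈ S, ∀ k, |W i k| * v i = W i k * v k := by
      intro i hi k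
      have hvi : |v i| = m := (hmemS i).mp hi
      have hvi2 : v i * v i = m * m := by rw [← hvi]; exact (abs_mul_abs_self (v i)).symm
      have hrow0 : (∑ k, |W i k|) * v i - ∑ k, W i k * v k = 0 := by
        rw [← hrow v i, hvk]; rfl
      -- each term of the nonneg sum is zero
      have hterm : ∀ k ∈ Finset.univ, (0:ℝ) ≤ v i * (|W i k| * v i - W i k * v k) := by
        intro k _
        have h1 : v i * (|W i k| * v i) = |W i k| * (m * m) := by
          rw [← hvi2]; ring
        have h2 : v i * (W i k * v k) ≤ |W i k| * (m * m) := by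
          calc v i * (W i k * v k) ≤ |v i * (W i k * v k)| := le_abs_self _
            _ = |W i k| * (|v i| * |v k|) := by rw [abs_mul, abs_mul]; ring
            _ ≤ |W i k| * (m * m) := by
                apply mul_le_mul_of_nonneg_left _ (abs_nonneg _)
                rw [hvi]
                exact mul_le_mul_of_nonneg_left (hmax k) (le_of_lt hm)
        nlinarith [h1, h2]
      have hsum0 : ∑ k, v i * (|W i k| * v i - W i k * v k) = 0 := by
        rw [← Finset.mul_sum, Finset.sum_sub_distrib, ← Finset.sum_mul, hrow0, mul_zero]
      have := (Finset.sum_eq_zero_iff_of_nonneg hterm).mp hsum0 k (Finset.mem_univ k)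
      have hvine : v i ≠ 0 := by
        intro h; rw [h, abs_zero] at hvi; exact (ne_of_gt hm) hvi.symm
      have := mul_eq_zero.mp this
      rcases this with h | h
      · exact absurd h hvine
      · linarith [h]
    refine ⟨S, ⟨i₀, (hmemS i₀).mpr rfl⟩, ?_, fun i => if v i < 0 then -1 else 1, ?_, ?_⟩
    · -- in-isolation
      intro i hi j hj
      by_contra hw
      have hk := hkey i hi j
      have habs : |W i j| * m = |W i j| * |v j| := by
        have := congrArg abs hk
        rwa [abs_mul, abs_mul, abs_abs, (hmemS i).mp hi] at this
      have : m = |v j| := mul_left_cancel₀ (fun h => hw (abs_eq_zero.mp h)) habs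
      exact hj ((hmemS j).mpr this.symm)
    · intro i _; by_cases h : v i < 0 <;> simp [h]
    · intro i hi j hj
      set d : Fin N → ℝ := fun i => if v i < 0 then -1 else 1 with hd
      have hdv : ∀ i ∈ S, d i * v i = m := by
        intro i hi
        have hvi : |v i| = m := (hmemS i).mp hi
        by_cases h : v i < 0
        · simp only [hd, if_pos h]; rw [← hvi, abs_of_neg h]; ring
        · simp only [hd, if_neg h]; rw [← hvi, abs_of_nonneg (not_lt.mp h)]; ring
      have hdd : ∀ i, d i * d i = 1 := by
        intro i; by_cases h : v i < 0 <;> simp [hd, h]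
      have hvi2 : v i * v i = m * m := by
        rw [← (hmemS i).mp hi]; exact (abs_mul_abs_self (v i)).symm
      have hmsq : m * (m * (d i * W i j * d j)) = m * (m * |W i j|) := by
        calc m * (m * (d i * W i j * d j))
            = (d i * v i) * ((d j * v j) * (d i * W i j * d j)) := by
              rw [hdv i hi, hdv j hj]
          _ = (d i * d i) * ((d j * d j) * (v i * (W i j * v j))) := by ring
          _ = v i * (W i j * v j) := by rw [hdd i, hdd j]; ring
          _ = v i * (|W i j| * v i) := by rw [← hkey i hi j]
          _ = |W i j| * (v i * v i) := by ring
          _ = m * (m * |W i j|) := by rw [hvi2]; ring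
      have := mul_left_cancel₀ (ne_of_gt hm) (mul_left_cancel₀ (ne_of_gt hm) hmsq)
      rw [this]
      exact abs_nonneg _
  · rintro ⟨S, ⟨i₀, hi₀⟩, hiso, d, hd1, hd2⟩
    rw [Matrix.exists_mulVec_eq_zero_iff]
    -- block decomposition along S
    let e : {x // x ∈ S} ⊕ {x // x ∉ S} ≃ Fin N := Equiv.sumCompl (· ∈ S)
    rw [← Matrix.det_submatrix_equiv_self e L]
    have h12 : (L.submatrix e e).toBlocks₁₂ = 0 := by
      ext i j
      have hne : (i : Fin N) ≠ (j : Fin N) := by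
        intro h
        exact j.2 (h ▸ i.2)
      simp only [Matrix.toBlocks₁₂, Matrix.submatrix_apply, Matrix.of_apply]
      show L (e (Sum.inl i)) (e (Sum.inr j)) = 0
      simp only [e, Equiv.sumCompl_apply_inl, Equiv.sumCompl_apply_inr]
      rw [hL, if_neg hne, hiso i.1 i.2 j.1 j.2, neg_zero]
    have hblock : L.submatrix e e =
        Matrix.fromBlocks ((L.submatrix e e).toBlocks₁₁) 0
          ((L.submatrix e e).toBlocks₂₁) ((L.submatrix e e).toBlocks₂₂) := by
      rw [← h12, Matrix.fromBlocks_toBlocks]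
    rw [hblock, Matrix.det_fromBlocks_zero₁₂]
    have hA : ((L.submatrix e e).toBlocks₁₁).det = 0 := by
      rw [← Matrix.exists_mulVec_eq_zero_iff]
      refine ⟨fun k => d k.1, ?_, ?_⟩
      · intro h
        have := congrFun h ⟨i₀, hi₀⟩
        simp only [Pi.zero_apply] at this
        rcases hd1 i₀ hi₀ with h' | h' <;> rw [h'] at this <;> norm_num at this
      · funext i
        simp only [Matrix.mulVec, dotProduct, Matrix.toBlocks₁₁, Matrix.submatrix_apply,
          Matrix.of_apply, Pi.zero_apply]
        have hcast : ∀ k : {x // x ∈ S},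
            L (e (Sum.inl i)) (e (Sum.inl k)) = L i.1 k.1 := by
          intro k; simp [e]
        have : ∑ k : {x // x ∈ S}, L (e (Sum.inl i)) (e (Sum.inl k)) * d k.1
            = ∑ k : {x // x ∈ S}, L i.1 k.1 * d k.1 := by
          exact Finset.sum_congr rfl (fun k _ => by rw [hcast k])
        rw [this, Finset.sum_coe_sort S (fun k => L i.1 k * d k)]
        -- now a sum over the finset S
        have hwsum : ∑ j, |W i.1 j| = ∑ j ∈ S, |W i.1 j| := by
          refine (Finset.sum_subset (Finset.subset_univ S) ?_).symm
          intro j _ hj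
          rw [hiso i.1 i.2 j hj, abs_zero]
        have hWd : ∀ k ∈ S, W i.1 k * d k = |W i.1 k| * d i.1 := by
          intro k hk
          have h0 : 0 ≤ d i.1 * W i.1 k * d k := hd2 i.1 i.2 k hk
          have habs : |d i.1 * W i.1 k * d k| = |W i.1 k| := by
            rw [abs_mul, abs_mul]
            rcases hd1 i.1 i.2 with h | h <;> rcases hd1 k hk with h' | h' <;>
              rw [h, h'] <;> norm_num
          have heq : d i.1 * W i.1 k * d k = |W i.1 k| := by
            rw [← abs_of_nonneg h0, habs]
          have hdd : d i.1 * d i.1 = 1 := by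
            rcases hd1 i.1 i.2 with h | h <;> rw [h] <;> norm_num
          calc W i.1 k * d k = (d i.1 * d i.1) * (W i.1 k * d k) := by rw [hdd]; ring
            _ = (d i.1 * W i.1 k * d k) * d i.1 := by ring
            _ = |W i.1 k| * d i.1 := by rw [heq]
        calc ∑ k ∈ S, L i.1 k * d k
            = ∑ k ∈ S, ((if k = i.1 then ∑ j, |W i.1 j| else 0) * d k - |W i.1 k| * d i.1) := by
              refine Finset.sum_congr rfl (fun k hk => ?_)
              rw [hLpt i.1 k, sub_mul, hWd k hk]
          _ = (∑ j, |W i.1 j|) * d i.1 - ∑ k ∈ S, |W i.1 k| * d i.1 := by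
              rw [Finset.sum_sub_distrib]
              congr 1
              simp only [ite_mul, zero_mul, Finset.sum_ite_eq', if_pos i.2]
          _ = 0 := by rw [hwsum, Finset.sum_mul, sub_self]
    rw [hA, zero_mul]
end

section
/- Let W ∈ ℝ^{N×N} be the adjacency matrix of a structurally balanced signed graph, let L be its signed Laplacian and L̄ the Laplacian of the unsigned matrix (|w_ij|). Then L and L̄ are similar matrices; in particular they have the same characteristic polynomial, the same eigenvalues (with multiplicities), and the same Jordan canonical form. -/
open Matrix

/-- Lemma 2: if the signed graph is structurally balanced, the signed Laplacian `L`
and the unsigned Laplacian `Lbar` are similar; in particular they have the same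
characteristic polynomial (hence the same eigenvalues with multiplicities and the
same Jordan canonical form). -/
theorem stmt6 {N : ℕ}
    (W : Matrix (Fin N) (Fin N) ℝ)
    (hWdiag : ∀ i, W i i = 0)
    (hWsgn : ∀ i j, 0 ≤ W i j * W j i)
    (hbal : ∃ d : Fin N → ℝ, (∀ i, d i = 1 ∨ d i = -1) ∧
      ∀ i j, 0 ≤ (Matrix.diagonal d * W * Matrix.diagonal d) i j)
    (L Lbar : Matrix (Fin N) (Fin N) ℝ)
    (hL : ∀ i j, L i j = if i = j then ∑ k, |W i k| else -W i j)
    (hLbar : ∀ i j, Lbar i j = if i = j then ∑ k, |W i k| else -|W i j|) :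
    (∃ T : Matrix (Fin N) (Fin N) ℝ, IsUnit T ∧ L = T * Lbar * T⁻¹) ∧
      L.charpoly = Lbar.charpoly := by
  obtain ⟨d, hd, hpos⟩ := hbal
  have hd2 : ∀ i, d i * d i = 1 := by
    intro i; rcases hd i with h | h <;> simp [h]
  have hdabs : ∀ i, |d i| = 1 := by
    intro i; rcases hd i with h | h <;> simp [h]
  set D : Matrix (Fin N) (Fin N) ℝ := Matrix.diagonal d with hD
  have hDD : D * D = 1 := by
    rw [hD, Matrix.diagonal_mul_diagonal]
    have : (fun i => d i * d i) = fun _ => (1 : ℝ) := funext hd2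
    rw [this, Matrix.diagonal_one]
  have hUnit : IsUnit D := ⟨⟨D, D, hDD, hDD⟩, rfl⟩
  have hinv : D⁻¹ = D := Matrix.inv_eq_right_inv hDD
  have hentry : ∀ (M : Matrix (Fin N) (Fin N) ℝ) i j,
      (D * M * D) i j = d i * M i j * d j := by
    intro M i j
    rw [hD, Matrix.mul_diagonal, Matrix.diagonal_mul]
  -- key: d i * W i j * d j = |W i j|
  have habs : ∀ i j, d i * W i j * d j = |W i j| := by
    intro i j
    have h1 : 0 ≤ d i * W i j * d j := by
      have := hpos i j; rwa [hentry W i j] at this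
    have h2 : |d i * W i j * d j| = |W i j| := by
      rw [abs_mul, abs_mul, hdabs, hdabs]; ring
    rw [← h2, abs_of_nonneg h1]
  have hW : ∀ i j, W i j = d i * |W i j| * d j := by
    intro i j
    rw [← habs i j]
    calc W i j = (d i * d i) * W i j * (d j * d j) := by rw [hd2 i, hd2 j]; ring
      _ = d i * (d i * W i j * d j) * d j := by ring
  have hLeq : L = D * Lbar * D := by
    ext i j
    rw [hentry, hL, hLbar]
    by_cases h : i = j
    · subst h; rw [if_pos rfl, if_pos rfl]
      calc (∑ k, |W i k|) = (∑ k, |W i k|) * (d i * d i) := by rw [hd2 i, mul_one]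
        _ = d i * (∑ k, |W i k|) * d i := by ring
    · rw [if_neg h, if_neg h, ← habs i j]
      linear_combination (W i j * d j * d j) * hd2 i + W i j * hd2 j
  refine ⟨⟨D, hUnit, by rw [hinv]; exact hLeq⟩, ?_⟩
  -- charpoly equal
  set Dp : Matrix (Fin N) (Fin N) (Polynomial ℝ) :=
    (Polynomial.C : ℝ →+* Polynomial ℝ).mapMatrix D with hDp
  have hmap : Dp * Dp = 1 := by
    rw [hDp, ← RingHom.map_mul, hDD, RingHom.map_one]
  have hcomm : Commute (Matrix.scalar (Fin N) (Polynomial.X : Polynomial ℝ)) Dp :=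
    Matrix.scalar_commute _ (fun r' => Commute.all _ _) _
  have hch : charmatrix (D * Lbar * D) =
      Dp * charmatrix Lbar * Dp := by
    unfold charmatrix
    rw [Matrix.mul_sub, Matrix.sub_mul, RingHom.map_mul, RingHom.map_mul]
    congr 1
    rw [← hcomm.eq, Matrix.mul_assoc, hmap, Matrix.mul_one]
  rw [Matrix.charpoly, Matrix.charpoly, hLeq, hch, Matrix.det_mul, Matrix.det_mul]
  have hdet : Dp.det * Dp.det = 1 := by
    rw [← Matrix.det_mul, hmap, Matrix.det_one]
  calc Dp.det * (charmatrix Lbar).det * Dp.det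
      = (charmatrix Lbar).det * (Dp.det * Dp.det) := by ring
    _ = (charmatrix Lbar).det := by rw [hdet, mul_one]
end

section
/- Let L ∈ ℂ^{m×m} and A, B ∈ ℂ^{n×n}. Then the spectrum of the (mn)×(mn) matrix I_m ⊗ A + L ⊗ B equals the union over all eigenvalues ε of L of the spectra of A + ε·B; that is, μ ∈ ℂ is an eigenvalue of I_m ⊗ A + L ⊗ B if and only if there exists an eigenvalue ε of L such that μ is an eigenvalue of A + ε·B. -/
open Matrix Polynomial
open scoped Kronecker

section aux

variable {m n : ℕ}

/-- `N ↦ 1 ⊗ₖ N` as a ring hom. -/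
noncomputable def rightKron (m n : ℕ) :
    Matrix (Fin n) (Fin n) ℂ →+* Matrix (Fin m × Fin n) (Fin m × Fin n) ℂ where
  toFun N := (1 : Matrix (Fin m) (Fin m) ℂ) ⊗ₖ N
  map_one' := Matrix.one_kronecker_one
  map_mul' N₁ N₂ := by rw [← Matrix.mul_kronecker_mul, one_mul]
  map_zero' := Matrix.kronecker_zero _
  map_add' N₁ N₂ := Matrix.kronecker_add _ _ _

/-- `M ↦ M ⊗ₖ 1` as an algebra hom. -/
noncomputable def leftKron (m n : ℕ) :
    Matrix (Fin m) (Fin m) ℂ →ₐ[ℂ] Matrix (Fin m × Fin n) (Fin m × Fin n) ℂ where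
  toFun M := M ⊗ₖ (1 : Matrix (Fin n) (Fin n) ℂ)
  map_one' := Matrix.one_kronecker_one
  map_mul' M₁ M₂ := by rw [← Matrix.mul_kronecker_mul, one_mul]
  map_zero' := Matrix.zero_kronecker _
  map_add' M₁ M₂ := Matrix.add_kronecker _ _ _
  commutes' c := by
    show (algebraMap ℂ (Matrix (Fin m) (Fin m) ℂ) c) ⊗ₖ (1 : Matrix (Fin n) (Fin n) ℂ) = _
    rw [Algebra.algebraMap_eq_smul_one, Matrix.smul_kronecker, Matrix.one_kronecker_one,
      ← Algebra.algebraMap_eq_smul_one]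

lemma kron_mulVec (M₁ : Matrix (Fin m) (Fin m) ℂ) (M₂ : Matrix (Fin n) (Fin n) ℂ)
    (w : Fin m → ℂ) (v : Fin n → ℂ) :
    (M₁ ⊗ₖ M₂) *ᵥ (fun p => w p.1 * v p.2) = fun p => (M₁ *ᵥ w) p.1 * (M₂ *ᵥ v) p.2 := by
  funext ⟨i, j⟩
  simp only [Matrix.mulVec, dotProduct, Fintype.sum_prod_type,
    Matrix.kroneckerMap_apply]
  rw [Finset.sum_mul_sum]
  exact Finset.sum_congr rfl fun k _ => Finset.sum_congr rfl fun l _ => by ring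

/-- The key invertibility lemma. -/
lemma key (L : Matrix (Fin m) (Fin m) ℂ) (A B : Matrix (Fin n) (Fin n) ℂ) (μ : ℂ)
    (h : ∀ ε ∈ spectrum ℂ L, (μ • 1 - (A + ε • B)).det ≠ 0) :
    IsUnit (μ • (1 : Matrix (Fin m × Fin n) (Fin m × Fin n) ℂ)
      - ((1 : Matrix (Fin m) (Fin m) ℂ) ⊗ₖ A + L ⊗ₖ B)) := by
  rcases Nat.eq_zero_or_pos m with hm | hm
  · subst hm
    haveI : IsEmpty (Fin 0 × Fin n) := by infer_instance
    exact isUnit_of_subsingleton _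
  -- spectrum of L is nonempty
  haveI : NeZero m := ⟨hm.ne'⟩
  haveI : Nontrivial (Matrix (Fin m) (Fin m) ℂ) := inferInstance
  have hne : (spectrum ℂ L).Nonempty :=
    spectrum.nonempty_of_isAlgClosed_of_finiteDimensional (𝕜 := ℂ)
      (A := Matrix (Fin m) (Fin m) ℂ) L
  -- the matrix polynomial
  set D : Matrix (Fin n) (Fin n) ℂ[X] :=
    (μ • 1 - A).map Polynomial.C - (X : ℂ[X]) • (B.map Polynomial.C) with hD
  set p : ℂ[X] := D.det with hp
  have hDeval : ∀ ε : ℂ, D.map (evalRingHom ε) = μ • 1 - (A + ε • B) := by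
    intro ε
    ext i j
    simp [hD, Matrix.sub_apply, Matrix.smul_apply, Matrix.add_apply, Matrix.map_apply,
      smul_eq_mul]
    ring
  have hpeval : ∀ ε : ℂ, p.eval ε = (μ • 1 - (A + ε • B)).det := by
    intro ε
    have := RingHom.map_det (evalRingHom ε) D
    rw [RingHom.mapMatrix_apply, hDeval ε] at this
    simpa [hp] using this
  -- aeval L p is a unit
  have hunit : IsUnit (Polynomial.aeval L p) := by
    apply spectrum.isUnit_of_zero_notMem (R := ℂ)
    rw [spectrum.map_polynomial_aeval_of_nonempty L p hne]
    rintro ⟨ε, hε, hev⟩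
    exact h ε hε (by rw [← hpeval ε]; exact hev)
  -- the evaluation ring hom
  have hcomm : ∀ N : Matrix (Fin n) (Fin n) ℂ,
      Commute (rightKron m n N) (L ⊗ₖ (1 : Matrix (Fin n) (Fin n) ℂ)) := by
    intro N
    show _ * _ = _ * _
    simp only [rightKron, RingHom.coe_mk, MonoidHom.coe_mk, OneHom.coe_mk]
    rw [← Matrix.mul_kronecker_mul, ← Matrix.mul_kronecker_mul, one_mul, mul_one,
      one_mul, mul_one]
  let ψ : (Matrix (Fin n) (Fin n) ℂ)[X] →+* Matrix (Fin m × Fin n) (Fin m × Fin n) ℂ :=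
    Polynomial.eval₂RingHom' (rightKron m n) (L ⊗ₖ (1 : Matrix (Fin n) (Fin n) ℂ)) hcomm
  -- matPolyEquiv D
  have hq : matPolyEquiv D = Polynomial.C (μ • 1 - A) - X * Polynomial.C B := by
    rw [hD, _root_.map_sub, matPolyEquiv_map_C, matPolyEquiv_map_smul, matPolyEquiv_map_C,
      Polynomial.map_X]
  -- the adjugate identity pushed through matPolyEquiv and ψ
  have hadj : D * D.adjugate = p • 1 := Matrix.mul_adjugate D
  have hadj2 : matPolyEquiv D * matPolyEquiv D.adjugate = matPolyEquiv (p • (1 : Matrix (Fin n) (Fin n) ℂ[X])) := by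
    rw [← _root_.map_mul, hadj]
  have hmain : ψ (matPolyEquiv D) * ψ (matPolyEquiv D.adjugate)
      = ψ (matPolyEquiv (p • (1 : Matrix (Fin n) (Fin n) ℂ[X]))) := by
    rw [← _root_.map_mul, hadj2]
  -- compute ψ (matPolyEquiv D)
  have hψD : ψ (matPolyEquiv D)
      = μ • (1 : Matrix (Fin m × Fin n) (Fin m × Fin n) ℂ)
        - ((1 : Matrix (Fin m) (Fin m) ℂ) ⊗ₖ A + L ⊗ₖ B) := by
    rw [hq, _root_.map_sub, _root_.map_mul]
    have h1 : ψ (Polynomial.C (μ • 1 - A)) = rightKron m n (μ • 1 - A) :=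
      Polynomial.eval₂_C _ _
    have h2 : ψ (X : (Matrix (Fin n) (Fin n) ℂ)[X]) = L ⊗ₖ (1 : Matrix (Fin n) (Fin n) ℂ) :=
      Polynomial.eval₂_X _ _
    have h3 : ψ (Polynomial.C B) = rightKron m n B := Polynomial.eval₂_C _ _
    rw [h1, h2, h3]
    show (1 : Matrix (Fin m) (Fin m) ℂ) ⊗ₖ (μ • 1 - A)
        - (L ⊗ₖ (1 : Matrix (Fin n) (Fin n) ℂ)) * ((1 : Matrix (Fin m) (Fin m) ℂ) ⊗ₖ B) = _
    rw [← Matrix.mul_kronecker_mul, mul_one, one_mul]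
    ext ⟨i, j⟩ ⟨k, l⟩
    simp only [Matrix.sub_apply, Matrix.add_apply, Matrix.smul_apply, Matrix.one_apply,
      Matrix.kroneckerMap_apply, smul_eq_mul, Prod.mk.injEq, Prod.ext_iff]
    by_cases hik : i = k <;> by_cases hjl : j = l <;>
      simp [hik, hjl, Matrix.one_apply] <;> ring
  -- compute ψ (matPolyEquiv (p • 1))
  have hψp : ψ (matPolyEquiv (p • (1 : Matrix (Fin n) (Fin n) ℂ[X])))
      = (Polynomial.aeval L p) ⊗ₖ (1 : Matrix (Fin n) (Fin n) ℂ) := by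
    rw [matPolyEquiv_smul_one]
    show Polynomial.eval₂ (rightKron m n) (L ⊗ₖ (1 : Matrix (Fin n) (Fin n) ℂ))
      (p.map (algebraMap ℂ (Matrix (Fin n) (Fin n) ℂ))) = _
    rw [Polynomial.eval₂_map]
    have hcomp : (rightKron m n).comp (algebraMap ℂ (Matrix (Fin n) (Fin n) ℂ))
        = algebraMap ℂ (Matrix (Fin m × Fin n) (Fin m × Fin n) ℂ) := by
      refine RingHom.ext fun c => ?_
      show (1 : Matrix (Fin m) (Fin m) ℂ) ⊗ₖ (algebraMap ℂ (Matrix (Fin n) (Fin n) ℂ) c) = _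
      rw [Algebra.algebraMap_eq_smul_one, Algebra.algebraMap_eq_smul_one,
        Matrix.kronecker_smul, Matrix.one_kronecker_one]
    rw [hcomp]
    have : L ⊗ₖ (1 : Matrix (Fin n) (Fin n) ℂ) = leftKron m n L := rfl
    rw [← Polynomial.aeval_def, this, Polynomial.aeval_algHom_apply]
    rfl
  -- finish via determinants
  rw [hψD, hψp] at hmain
  have hU : IsUnit ((Polynomial.aeval L p) ⊗ₖ (1 : Matrix (Fin n) (Fin n) ℂ)) :=
    hunit.map (leftKron m n)
  rw [Matrix.isUnit_iff_isUnit_det, isUnit_iff_ne_zero]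
  have hdet := congrArg Matrix.det hmain
  rw [Matrix.det_mul] at hdet
  have hUdet : ((Polynomial.aeval L p) ⊗ₖ (1 : Matrix (Fin n) (Fin n) ℂ)).det ≠ 0 := by
    rw [← isUnit_iff_ne_zero, ← Matrix.isUnit_iff_isUnit_det]
    exact hU
  intro h0
  rw [h0, zero_mul] at hdet
  exact hUdet hdet.symm

end aux

/-- Spectrum of `I_m ⊗ A + L ⊗ B`: `μ` is an eigenvalue of `I_m ⊗ A + L ⊗ B` iff
there exists an eigenvalue `ε` of `L` such that `μ` is an eigenvalue of `A + ε B`. -/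
theorem stmt9 {m n : ℕ}
    (L : Matrix (Fin m) (Fin m) ℂ) (A B : Matrix (Fin n) (Fin n) ℂ) :
    ∀ μ : ℂ,
      μ ∈ spectrum ℂ ((1 : Matrix (Fin m) (Fin m) ℂ) ⊗ₖ A + L ⊗ₖ B) ↔
        ∃ ε ∈ spectrum ℂ L, μ ∈ spectrum ℂ (A + ε • B) := by
  intro μ
  constructor
  · -- forward: contrapositive via `key`
    intro hμ
    by_contra hcon
    push_neg at hcon
    have h : ∀ ε ∈ spectrum ℂ L, (μ • 1 - (A + ε • B)).det ≠ 0 := by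
      intro ε hε
      have := hcon ε hε
      rw [spectrum.mem_iff, Algebra.algebraMap_eq_smul_one, not_not] at this
      rw [← isUnit_iff_ne_zero, ← Matrix.isUnit_iff_isUnit_det]
      exact this
    have := key L A B μ h
    rw [spectrum.mem_iff, Algebra.algebraMap_eq_smul_one] at hμ
    exact hμ this
  · -- backward: construct eigenvector
    rintro ⟨ε, hε, hμ⟩
    rw [spectrum.mem_iff, Algebra.algebraMap_eq_smul_one] at hε hμ ⊢
    -- eigenvector of L
    obtain ⟨w, hw0, hw⟩ : ∃ w ≠ 0, (ε • 1 - L) *ᵥ w = 0 := by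
      rw [Matrix.exists_mulVec_eq_zero_iff]
      rw [Matrix.isUnit_iff_isUnit_det, isUnit_iff_ne_zero, not_not] at hε
      exact hε
    obtain ⟨v, hv0, hv⟩ : ∃ v ≠ 0, (μ • 1 - (A + ε • B)) *ᵥ v = 0 := by
      rw [Matrix.exists_mulVec_eq_zero_iff]
      rw [Matrix.isUnit_iff_isUnit_det, isUnit_iff_ne_zero, not_not] at hμ
      exact hμ
    have hLw : L *ᵥ w = ε • w := by
      have := hw
      rw [Matrix.sub_mulVec, Matrix.smul_mulVec, Matrix.one_mulVec, sub_eq_zero] at this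
      exact this.symm
    have hAv : (A + ε • B) *ᵥ v = μ • v := by
      have := hv
      rw [Matrix.sub_mulVec, Matrix.smul_mulVec, Matrix.one_mulVec, sub_eq_zero] at this
      exact this.symm
    set x : Fin m × Fin n → ℂ := fun p => w p.1 * v p.2 with hx
    have hx0 : x ≠ 0 := by
      obtain ⟨i, hi⟩ := Function.ne_iff.mp hw0
      obtain ⟨j, hj⟩ := Function.ne_iff.mp hv0
      intro hc
      have := congrFun hc (i, j)
      simp only [hx, Pi.zero_apply] at this
      exact (mul_ne_zero hi hj) this
    have hmul : (μ • 1 - ((1 : Matrix (Fin m) (Fin m) ℂ) ⊗ₖ A + L ⊗ₖ B)) *ᵥ x = 0 := by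
      rw [Matrix.sub_mulVec, Matrix.add_mulVec, Matrix.smul_mulVec, Matrix.one_mulVec]
      rw [hx, kron_mulVec, kron_mulVec, hLw, Matrix.one_mulVec]
      funext ⟨i, j⟩
      have h1 : (A *ᵥ v) j + ε * (B *ᵥ v) j = μ * v j := by
        have := congrFun hAv j
        simpa [Matrix.add_mulVec, Matrix.smul_mulVec] using this
      simp only [Pi.sub_apply, Pi.add_apply, Pi.smul_apply, Pi.zero_apply, smul_eq_mul]
      linear_combination (-(w i)) * h1
    rw [Matrix.isUnit_iff_isUnit_det, isUnit_iff_ne_zero, not_ne_iff,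
      ← Matrix.exists_mulVec_eq_zero_iff]
    exact ⟨x, hx0, hmul⟩
end

section
/- Let A, F ∈ ℂ^{n×n}, h > 0, σ ∈ [0,1], Λ = I_n − A, and 𝒜 = σΛ + (1−σ)·exp(−Ah)·Λ. Let N ≥ 2, let λ_2,…,λ_N ∈ ℂ, and let J ∈ ℂ^{(N−1)×(N−1)} be upper triangular with diagonal entries λ_2,…,λ_N. Let s ∈ ℂ be such that sI_n − A is invertible, and set ϱ(s) = (1−σ)·(sI_n − A)^{−1}·(exp(−Ah) − e^{−sh}·I_n)·Λ. Then the determinant of the 2(N−1)n-dimensional block matrix [[I_{N−1} ⊗ (sI_n − A), −I_{N−1} ⊗ (σΛ + (1−σ)e^{−sh}Λ)], [J ⊗ F, I_{(N−1)n} + J ⊗ (F·ϱ(s))]] equals ∏_{i=2}^N det(sI_n − (A − λ_i·𝒜F)). -/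
open Matrix
open scoped Kronecker

/-!
The top-left block `I ⊗ (sI - A)` is invertible, so the determinant is `det (sI - A) ^ (N - 1)`
times that of its Schur complement. Since `ϱ(s) + (sI - A)⁻¹ (σΛ + (1 - σ) e^{-sh} Λ) = (sI - A)⁻¹ 𝒜`,
the Schur complement is `I + J ⊗ (F (sI - A)⁻¹ 𝒜)`, which is block upper triangular with diagonal
blocks `I + λᵢ F (sI - A)⁻¹ 𝒜`. Finally `det (sI - A) · det (I + λ F (sI - A)⁻¹ 𝒜) =
det (sI - A + λ 𝒜 F)` by the matrix determinant lemma.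
-/

namespace Matrix

theorem IsUpperTriangular.blockTriangular_kronecker {m n R : Type*} [LT m] [MulZeroClass R]
    {J : Matrix m m R} (hJ : J.IsUpperTriangular) (X : Matrix n n R) :
    (J ⊗ₖ X).BlockTriangular Prod.fst :=
  fun p q hqp => by simp [hJ hqp]

variable {m n R : Type*} [Fintype m] [Fintype n] [DecidableEq m] [DecidableEq n] [CommRing R]

theorem BlockTriangular.det_fst [LinearOrder m] {M : Matrix (m × n) (m × n) R}
    (hM : M.BlockTriangular Prod.fst) :
    M.det = ∏ k, (M.submatrix (k, ·) (k, ·)).det := by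
  rw [hM.det_fintype]
  refine Finset.prod_congr rfl fun k _ => ?_
  let e : n ≃ {a : m × n // a.1 = k} :=
    ⟨fun q => ⟨(k, q), rfl⟩, fun a => a.1.2, fun _ => rfl,
      fun a => Subtype.ext (Prod.ext a.2.symm rfl)⟩
  rw [← det_submatrix_equiv_self e]
  rfl

theorem IsUpperTriangular.det_one_add_kronecker [LinearOrder m] {J : Matrix m m R}
    (hJ : J.IsUpperTriangular) (X : Matrix n n R) :
    (1 + J ⊗ₖ X).det = ∏ k, (1 + J k k • X).det := by
  rw [(blockTriangular_one.add (hJ.blockTriangular_kronecker X)).det_fst]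
  refine Finset.prod_congr rfl fun k _ => congrArg det ?_
  ext i j
  simp [one_apply]

theorem det_fromBlocks_one_kronecker {S : Matrix n n R} (hS : IsUnit S.det)
    (J : Matrix m m R) (F M G : Matrix n n R) :
    (fromBlocks (1 ⊗ₖ S) (-(1 ⊗ₖ M)) (J ⊗ₖ F) (1 + J ⊗ₖ G)).det
      = S.det ^ Fintype.card m * (1 + J ⊗ₖ (G + F * S⁻¹ * M)).det := by
  have hdet : (1 ⊗ₖ S : Matrix (m × n) (m × n) R).det = S.det ^ Fintype.card m := by
    rw [det_kronecker, det_one, one_pow, one_mul]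
  let := invertibleOfIsUnitDet _ (hdet ▸ hS.pow _)
  rw [det_fromBlocks₁₁, hdet, invOf_eq_nonsing_inv, inv_kronecker, inv_one, mul_neg,
    sub_neg_eq_add, ← mul_kronecker_mul, ← mul_kronecker_mul, mul_one, mul_one, add_assoc,
    ← kronecker_add]

end Matrix

theorem stmt10_general {n N : ℕ}
    (A F : Matrix (Fin n) (Fin n) ℂ)
    (h σ : ℝ)
    (Λ : Matrix (Fin n) (Fin n) ℂ)
    (𝒜 : Matrix (Fin n) (Fin n) ℂ)
    (h𝒜 : 𝒜 = (σ : ℂ) • Λ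
      + ((1 - σ : ℝ) : ℂ) • (NormedSpace.exp (-((h : ℂ) • A)) * Λ))
    (lam : Fin (N - 1) → ℂ)
    (J : Matrix (Fin (N - 1)) (Fin (N - 1)) ℂ)
    (hJdiag : ∀ i, J i i = lam i)
    (hJlt : ∀ i j : Fin (N - 1), j < i → J i j = 0)
    (s : ℂ)
    (hs : IsUnit (s • (1 : Matrix (Fin n) (Fin n) ℂ) - A))
    (ϱ : Matrix (Fin n) (Fin n) ℂ)
    (hϱ : ϱ = ((1 - σ : ℝ) : ℂ) •
      ((s • (1 : Matrix (Fin n) (Fin n) ℂ) - A)⁻¹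
        * (NormedSpace.exp (-((h : ℂ) • A)) - Complex.exp (-(s * h)) • 1) * Λ)) :
    (Matrix.fromBlocks
      ((1 : Matrix (Fin (N - 1)) (Fin (N - 1)) ℂ) ⊗ₖ (s • (1 : Matrix (Fin n) (Fin n) ℂ) - A))
      (-((1 : Matrix (Fin (N - 1)) (Fin (N - 1)) ℂ) ⊗ₖ
          ((σ : ℂ) • Λ + (((1 - σ : ℝ) : ℂ) * Complex.exp (-(s * h))) • Λ)))
      (J ⊗ₖ F)
      (1 + J ⊗ₖ (F * ϱ))).det
      = ∏ i : Fin (N - 1),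
          (s • (1 : Matrix (Fin n) (Fin n) ℂ) - (A - lam i • (𝒜 * F))).det := by
  set S := s • (1 : Matrix (Fin n) (Fin n) ℂ) - A
  have hS : IsUnit S.det := (isUnit_iff_isUnit_det S).mp hs
  have hJ : J.IsUpperTriangular := fun i j hji => hJlt i j hji
  have hschur : F * ϱ
      + F * S⁻¹ * ((σ : ℂ) • Λ + (((1 - σ : ℝ) : ℂ) * Complex.exp (-(s * h))) • Λ)
      = F * S⁻¹ * 𝒜 := by
    rw [hϱ, h𝒜]
    simp only [Matrix.mul_add, Matrix.mul_sub, Matrix.sub_mul, Matrix.mul_smul, Matrix.smul_mul,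
      Matrix.mul_assoc, Matrix.one_mul, smul_sub, smul_smul]
    module
  rw [det_fromBlocks_one_kronecker hS, hschur, hJ.det_one_add_kronecker,
    ← Finset.card_univ, Finset.pow_card_mul_prod]
  refine Finset.prod_congr rfl fun i _ => ?_
  rw [hJdiag, ← sub_add, ← Matrix.smul_mul (lam i) 𝒜 F, det_add_mul _ _ hS, Matrix.mul_smul]

/-- Characteristic determinant identity for the closed-loop memory dynamics in
Jordan coordinates: the determinant of the `2(N-1)n`-dimensional block matrix
equals `∏ᵢ det(sI - (A - λᵢ 𝒜F))`. -/
theorem stmt10 {n N : ℕ} (hN : 2 ≤ N)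
    (A F : Matrix (Fin n) (Fin n) ℂ)
    (h σ : ℝ) (hh : 0 < h) (hσ : σ ∈ Set.Icc (0 : ℝ) 1)
    (Λ : Matrix (Fin n) (Fin n) ℂ) (hΛ : Λ = 1 - A)
    (𝒜 : Matrix (Fin n) (Fin n) ℂ)
    (h𝒜 : 𝒜 = (σ : ℂ) • Λ
      + ((1 - σ : ℝ) : ℂ) • (NormedSpace.exp (-((h : ℂ) • A)) * Λ))
    (lam : Fin (N - 1) → ℂ)
    (J : Matrix (Fin (N - 1)) (Fin (N - 1)) ℂ)
    (hJdiag : ∀ i, J i i = lam i)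
    (hJlt : ∀ i j : Fin (N - 1), j < i → J i j = 0)
    (s : ℂ)
    (hs : IsUnit (s • (1 : Matrix (Fin n) (Fin n) ℂ) - A))
    (ϱ : Matrix (Fin n) (Fin n) ℂ)
    (hϱ : ϱ = ((1 - σ : ℝ) : ℂ) •
      ((s • (1 : Matrix (Fin n) (Fin n) ℂ) - A)⁻¹
        * (NormedSpace.exp (-((h : ℂ) • A)) - Complex.exp (-(s * h)) • 1) * Λ)) :
    (Matrix.fromBlocks
      ((1 : Matrix (Fin (N - 1)) (Fin (N - 1)) ℂ) ⊗ₖ (s • (1 : Matrix (Fin n) (Fin n) ℂ) - A))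
      (-((1 : Matrix (Fin (N - 1)) (Fin (N - 1)) ℂ) ⊗ₖ
          ((σ : ℂ) • Λ + (((1 - σ : ℝ) : ℂ) * Complex.exp (-(s * h))) • Λ)))
      (J ⊗ₖ F)
      (1 + J ⊗ₖ (F * ϱ))).det
      = ∏ i : Fin (N - 1),
          (s • (1 : Matrix (Fin n) (Fin n) ℂ) - (A - lam i • (𝒜 * F))).det :=
  stmt10_general A F h σ Λ 𝒜 h𝒜 lam J hJdiag hJlt s hs ϱ hϱ
end

section
/- Let A ∈ ℝ^{n×n}, Λ = I_n − A, σ ∈ [0,1] and h > 0. Let u : ℝ → ℝ^n be continuous and let x : ℝ → ℝ^n be differentiable with x′(t) = A·x(t) + σΛ·u(t) + (1−σ)Λ·u(t−h) for all t. Define z(t) = x(t) + (1−σ)·∫_{t−h}^{t} exp(A(t−h−s))·Λ·u(s) ds. Then z is differentiable and z′(t) = A·z(t) + 𝒜·u(t) for all t, where 𝒜 = σΛ + (1−σ)·exp(−Ah)·Λ. -/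
/-!
Pulling `exp ((t - h) • A)` out of the memory integral writes it as
`exp ((t - h) • A) *ᵥ (F t - F (t - h))`, where `F` is a primitive of `s ↦ exp ((-s) • A) *ᵥ Λ u(s)`.
The product rule and the fundamental theorem of calculus then show that the memory term `w`
satisfies `w' = A w + exp (-(h • A)) Λ u(t) - Λ u(t - h)`, so adding `(1 - σ) w` to `x` cancels
the delayed input `(1 - σ) Λ u(t - h)` and leaves `A z + 𝒜 u(t)`.
-/

open Matrix intervalIntegral NormedSpace

section
open scoped Matrix.Norms.Operator

theorem HasDerivAt.matrix_mulVec {𝕜 m n : Type*} [NontriviallyNormedField 𝕜] [CompleteSpace 𝕜]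
    [Fintype m] [Fintype n] {M : 𝕜 → Matrix m n 𝕜} {M' : Matrix m n 𝕜}
    {v : 𝕜 → n → 𝕜} {v' : n → 𝕜} {t : 𝕜} (hM : HasDerivAt M M' t) (hv : HasDerivAt v v' t) :
    HasDerivAt (fun t => M t *ᵥ v t) (M' *ᵥ v t + M t *ᵥ v') t :=
  let mulVecCLM : Matrix m n 𝕜 →L[𝕜] (n → 𝕜) →L[𝕜] m → 𝕜 :=
    LinearMap.toContinuousLinearMap
      (LinearMap.toContinuousLinearMap.toLinearMap ∘ₗ mulVecBilin 𝕜 𝕜)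
  (mulVecCLM.hasFDerivAt.comp_hasDerivAt t hM).clm_apply hv

end

variable {n : Type*} [Fintype n] [DecidableEq n]

theorem hasDerivAt_exp_sub_smul_mulVec (A : Matrix n n ℝ) (c : ℝ)
    {w : ℝ → n → ℝ} {w' : n → ℝ} {t : ℝ} (hw : HasDerivAt w w' t) :
    HasDerivAt (fun t => exp ((t - c) • A) *ᵥ w t)
      (A *ᵥ (exp ((t - c) • A) *ᵥ w t) + exp ((t - c) • A) *ᵥ w') t :=
  open scoped Matrix.Norms.Operator in
  (((hasDerivAt_exp_smul_const' A (t - c)).comp_sub_const t c).matrix_mulVec hw).congr_deriv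
    -- `rfl` identifies the topologies on matrices coming from the operator norm and from `Pi`
    (by rw [mulVec_mulVec]; rfl)

theorem continuous_exp_smul (A : Matrix n n ℝ) : Continuous fun s : ℝ => exp (s • A) :=
  open scoped Matrix.Norms.Operator in
  continuous_iff_continuousAt.2 fun s => (hasDerivAt_exp_smul_const' A s).continuousAt

theorem exp_smul_mulVec_exp_smul_mulVec (A : Matrix n n ℝ) (a b : ℝ) (v : n → ℝ) :
    exp (a • A) *ᵥ (exp (b • A) *ᵥ v) = exp ((a + b) • A) *ᵥ v := by
  rw [mulVec_mulVec, add_smul,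
    Matrix.exp_add_of_commute _ _ (((Commute.refl A).smul_left a).smul_right b)]

theorem intervalIntegral_exp_sub_smul_mulVec (A : Matrix n n ℝ) {v : ℝ → n → ℝ}
    (hv : Continuous v) (c a b : ℝ) :
    ∫ s in a..b, exp ((c - s) • A) *ᵥ v s
      = exp (c • A) *ᵥ ∫ s in a..b, exp ((-s) • A) *ᵥ v s := by
  let L : (n → ℝ) →L[ℝ] n → ℝ := LinearMap.toContinuousLinearMap (mulVecLin (exp (c • A)))
  have hexp : Continuous fun s : ℝ => exp ((-s) • A) := (continuous_exp_smul A).comp continuous_neg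
  have hint := (hexp.matrix_mulVec hv).intervalIntegrable (μ := MeasureTheory.volume) a b
  change _ = L _
  rw [← L.intervalIntegral_comp_comm hint]
  congr 1 with s : 1
  simp only [L, LinearMap.coe_toContinuousLinearMap', mulVecLin_apply,
    exp_smul_mulVec_exp_smul_mulVec, sub_eq_add_neg]

theorem hasDerivAt_intervalIntegral_exp_sub_smul_mulVec (A : Matrix n n ℝ) (h : ℝ)
    {v : ℝ → n → ℝ} (hv : Continuous v) (t : ℝ) :
    HasDerivAt (fun t => ∫ s in (t - h)..t, exp ((t - h - s) • A) *ᵥ v s)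
      (A *ᵥ (∫ s in (t - h)..t, exp ((t - h - s) • A) *ᵥ v s)
        + exp (-(h • A)) *ᵥ v t - v (t - h)) t := by
  set f : ℝ → n → ℝ := fun s => exp ((-s) • A) *ᵥ v s
  have hf : Continuous f := ((continuous_exp_smul A).comp continuous_neg).matrix_mulVec hv
  set F : ℝ → n → ℝ := fun r => ∫ s in 0..r, f s
  have hF : ∀ r, HasDerivAt F (f r) r := fun r => (hf.integral_hasStrictDerivAt 0 r).hasDerivAt
  have hF_sub : HasDerivAt (fun r => F r - F (r - h)) (f t - f (t - h)) t :=
    (hF t).sub ((hF (t - h)).comp_sub_const t h)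
  have hfactor : ∀ r, ∫ s in (r - h)..r, exp ((r - h - s) • A) *ᵥ v s
      = exp ((r - h) • A) *ᵥ (F r - F (r - h)) := fun r => by
    rw [intervalIntegral_exp_sub_smul_mulVec A hv,
      integral_interval_sub_left (hf.intervalIntegrable _ _) (hf.intervalIntegrable _ _)]
  simp_rw [hfactor]
  convert hasDerivAt_exp_sub_smul_mulVec A h hF_sub using 1
  simp only [f, mulVec_sub, exp_smul_mulVec_exp_smul_mulVec]
  rw [show t - h + -t = -h by ring, add_neg_cancel, neg_smul, zero_smul, exp_zero, one_mulVec]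
  abel

theorem stmt12_general {n : ℕ}
    (A : Matrix (Fin n) (Fin n) ℝ)
    (σ h : ℝ)
    (Λ : Matrix (Fin n) (Fin n) ℝ)
    (𝒜 : Matrix (Fin n) (Fin n) ℝ)
    (h𝒜 : 𝒜 = σ • Λ + (1 - σ) • (NormedSpace.exp (-(h • A)) * Λ))
    (u : ℝ → Fin n → ℝ) (hu : Continuous u)
    (x : ℝ → Fin n → ℝ)
    (hx : ∀ t : ℝ, HasDerivAt x
      (A *ᵥ x t + σ • (Λ *ᵥ u t) + (1 - σ) • (Λ *ᵥ u (t - h))) t)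
    (z : ℝ → Fin n → ℝ)
    (hz : ∀ t : ℝ, z t = x t +
      (1 - σ) • ∫ s in (t - h)..t, (NormedSpace.exp ((t - h - s) • A)) *ᵥ (Λ *ᵥ u s)) :
    ∀ t : ℝ, HasDerivAt z (A *ᵥ z t + 𝒜 *ᵥ u t) t := by
  intro t
  have hw := hasDerivAt_intervalIntegral_exp_sub_smul_mulVec A h
    ((continuous_const (y := Λ)).matrix_mulVec hu) t
  rw [funext hz]
  refine ((hx t).add (hw.const_smul (1 - σ))).congr_deriv ?_
  rw [h𝒜]
  simp only [mulVec_add, add_mulVec, mulVec_smul, smul_mulVec, mulVec_mulVec]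
  module

/-- The memory transformation: if `x' = Ax + σΛu(t) + (1-σ)Λu(t-h)` and
`z(t) = x(t) + (1-σ)∫_{t-h}^{t} e^{A(t-h-s)} Λ u(s) ds`, then
`z' = Az + 𝒜u` with `𝒜 = σΛ + (1-σ)e^{-Ah}Λ`. -/
theorem stmt12 {n : ℕ}
    (A : Matrix (Fin n) (Fin n) ℝ)
    (σ h : ℝ) (hσ : σ ∈ Set.Icc (0 : ℝ) 1) (hh : 0 < h)
    (Λ : Matrix (Fin n) (Fin n) ℝ) (hΛ : Λ = 1 - A)
    (𝒜 : Matrix (Fin n) (Fin n) ℝ)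
    (h𝒜 : 𝒜 = σ • Λ + (1 - σ) • (NormedSpace.exp (-(h • A)) * Λ))
    (u : ℝ → Fin n → ℝ) (hu : Continuous u)
    (x : ℝ → Fin n → ℝ)
    (hx : ∀ t : ℝ, HasDerivAt x
      (A *ᵥ x t + σ • (Λ *ᵥ u t) + (1 - σ) • (Λ *ᵥ u (t - h))) t)
    (z : ℝ → Fin n → ℝ)
    (hz : ∀ t : ℝ, z t = x t +
      (1 - σ) • ∫ s in (t - h)..t, (NormedSpace.exp ((t - h - s) • A)) *ᵥ (Λ *ᵥ u s)) :
    ∀ t : ℝ, HasDerivAt z (A *ᵥ z t + 𝒜 *ᵥ u t) t :=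
  stmt12_general A σ h Λ 𝒜 h𝒜 u hu x hx z hz
end

section
/- Let A, B ∈ ℝ^{n×n}, γ > 0, and let P ∈ ℝ^{n×n} be symmetric positive definite satisfying the parametric algebraic Riccati equation AᵀP + PA − P·B·Bᵀ·P = −γP. If every eigenvalue of A is purely imaginary (has zero real part), then trace(Bᵀ·P·B) = nγ. -/
open Matrix Polynomial

lemma root_mem_spectrum {n : ℕ} (M : Matrix (Fin n) (Fin n) ℂ) {μ : ℂ}
    (h : μ ∈ M.charpoly.roots) : μ ∈ spectrum ℂ M := by
  have hroot : M.charpoly.IsRoot μ := isRoot_of_mem_roots h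
  rw [spectrum.mem_iff]
  intro hu
  rw [Matrix.isUnit_iff_isUnit_det] at hu
  have hdet : (algebraMap ℂ (Matrix (Fin n) (Fin n) ℂ) μ - M).det = M.charpoly.eval μ := by
    have : (algebraMap ℂ (Matrix (Fin n) (Fin n) ℂ) μ - M) =
        (charmatrix M).map (evalRingHom μ) := by
      ext i j
      by_cases hij : i = j <;>
        simp [hij, charmatrix_apply, Matrix.algebraMap_matrix_apply, Matrix.diagonal_apply]
    rw [this, Matrix.charpoly]
    exact ((RingHom.map_det (evalRingHom μ) _)).symm
  rw [hdet, hroot.eq_zero] at hu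
  exact hu.ne_zero rfl

lemma trace_eq_zero_of_spectrum_im {n : ℕ} (A : Matrix (Fin n) (Fin n) ℝ)
    (him : ∀ μ ∈ spectrum ℂ (A.map Complex.ofReal), μ.re = 0) :
    A.trace = 0 := by
  set M := A.map Complex.ofReal with hM
  have htr : M.trace = M.charpoly.roots.sum := Matrix.trace_eq_sum_roots_charpoly M
  have hre : (M.charpoly.roots.sum).re = 0 := by
    have : M.charpoly.roots.sum.re = Complex.reAddGroupHom M.charpoly.roots.sum := rfl
    rw [this, map_multiset_sum]
    refine Multiset.sum_eq_zero ?_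
    intro x hx
    simp only [Multiset.mem_map] at hx
    obtain ⟨μ, hμ, rfl⟩ := hx
    exact him μ (root_mem_spectrum M hμ)
  have hMtr : M.trace = (A.trace : ℂ) := by
    simp [hM, Matrix.trace, Matrix.map_apply]
  have : (A.trace : ℂ).re = 0 := by rw [← hMtr, htr]; exact hre
  simpa using this

open Matrix

/-- If `P > 0` solves the parametric ARE `AᵀP + PA - PBBᵀP = -γP` and all
eigenvalues of `A` are purely imaginary, then `trace(BᵀPB) = nγ`. -/
theorem stmt13 {n : ℕ}
    (A B P : Matrix (Fin n) (Fin n) ℝ) (γ : ℝ) (hγ : 0 < γ)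
    (hPsym : P.IsSymm) (hP : P.PosDef)
    (hare : Aᵀ * P + P * A - P * B * Bᵀ * P = -γ • P)
    (him : ∀ μ ∈ spectrum ℂ (A.map Complex.ofReal), μ.re = 0) :
    (Bᵀ * P * B).trace = n * γ := by
  have hdet : IsUnit P.det := (Matrix.PosDef.det_pos hP).ne'.isUnit
  have h1 : P⁻¹ * P = 1 := Matrix.nonsing_inv_mul P hdet
  have h2 : P * P⁻¹ = 1 := Matrix.mul_nonsing_inv P hdet
  have htrA : A.trace = 0 := trace_eq_zero_of_spectrum_im A him
  have key := congrArg (fun M => (P⁻¹ * M).trace) hare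
  simp only [mul_add, mul_sub, Matrix.trace_add, Matrix.trace_sub] at key
  have e1 : (P⁻¹ * (Aᵀ * P)).trace = A.trace := by
    rw [Matrix.trace_mul_comm P⁻¹ (Aᵀ * P), mul_assoc, h2, mul_one, Matrix.trace_transpose]
  have e2 : (P⁻¹ * (P * A)).trace = A.trace := by
    rw [← mul_assoc, h1, one_mul]
  have e3 : (P⁻¹ * (P * B * Bᵀ * P)).trace = (Bᵀ * P * B).trace := by
    rw [mul_assoc (P * B) Bᵀ P, mul_assoc P B (Bᵀ * P), ← mul_assoc P⁻¹ P, h1, one_mul,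
      Matrix.trace_mul_comm]
  have e4 : (P⁻¹ * (-γ • P)).trace = -γ * n := by
    rw [Matrix.mul_smul, Matrix.trace_smul, h1, Matrix.trace_one]
    simp [mul_comm]
  rw [e1, e2, e3, e4, htrA] at key
  linarith
end

section
/- Let A, B ∈ ℝ^{n×n}, γ > 0, and let P ∈ ℝ^{n×n} be symmetric positive definite satisfying the parametric algebraic Riccati equation AᵀP + PA − P·B·Bᵀ·P = −γP. If every eigenvalue of A is purely imaginary, then P·B·Bᵀ·P ≤ nγ·P in the Loewner order, i.e., nγ·P − P·B·Bᵀ·P is positive semidefinite. -/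
/-!
By the Riccati equation, `M := PBBᵀP = γP + AᵀP + PA`, so `tr(P⁻¹M) = nγ + 2 tr A = nγ`, the
trace of `A` vanishing because it is the sum of the (purely imaginary) eigenvalues of `A`.
Conjugating by `S = P^{1/2}`, the positive semidefinite matrix `N = S⁻¹MS⁻¹` has trace `nγ`,
hence `N ≤ nγ·1` (Cauchy–Schwarz), i.e. `M ≤ nγ·P`.
-/

open Matrix

namespace Matrix

variable {m n : Type*} [Fintype m] [Fintype n]

lemma dotProduct_mulVec_self_le_trace_mul (R : Matrix m n ℝ) (x : n → ℝ) :
    (R *ᵥ x) ⬝ᵥ (R *ᵥ x) ≤ (Rᵀ * R).trace * (x ⬝ᵥ x) := by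
  have hRx : (R *ᵥ x) ⬝ᵥ (R *ᵥ x) = ∑ i, (∑ j, R i j * x j) ^ 2 := by
    simp only [dotProduct, mulVec, sq]
  have htr : (Rᵀ * R).trace = ∑ i, ∑ j, R i j ^ 2 := by
    simp only [trace, diag, mul_apply, transpose_apply, sq]
    exact Finset.sum_comm
  rw [hRx, htr, Finset.sum_mul]
  simp only [dotProduct, ← sq]
  exact Finset.sum_le_sum fun i _ ↦ Finset.sum_mul_sq_le_sq_mul_sq _ _ _

variable [DecidableEq n]

lemma posSemidef_trace_smul_one_sub_transpose_mul_self (R : Matrix m n ℝ) :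
    ((Rᵀ * R).trace • (1 : Matrix n n ℝ) - Rᵀ * R).PosSemidef := by
  refine posSemidef_iff_dotProduct_mulVec.mpr ⟨?_, fun x ↦ ?_⟩
  · simp [IsHermitian, transpose_sub, transpose_mul]
  · have hRx : x ⬝ᵥ ((Rᵀ * R) *ᵥ x) = (R *ᵥ x) ⬝ᵥ (R *ᵥ x) := by
      rw [← mulVec_mulVec, dotProduct_mulVec, vecMul_transpose]
    rw [star_trivial, sub_mulVec, dotProduct_sub, hRx, smul_mulVec, one_mulVec, dotProduct_smul,
      smul_eq_mul, sub_nonneg]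
    exact dotProduct_mulVec_self_le_trace_mul R x

open MatrixOrder in
lemma PosDef.posSemidef_trace_inv_mul_smul_sub_transpose_mul_self {P : Matrix n n ℝ}
    (hP : P.PosDef) (C : Matrix m n ℝ) :
    ((P⁻¹ * (Cᵀ * C)).trace • P - Cᵀ * C).PosSemidef := by
  set S := CFC.sqrt P
  have hSS : S * S = P := CFC.sqrt_mul_sqrt_self P hP.posSemidef.nonneg
  have hSt : Sᵀ = S := (CFC.sqrt_nonneg P).posSemidef.isHermitian
  have hS : IsUnit S.det := (isUnit_iff_isUnit_det S).mp <| (CFC.isUnit_sqrt_iff P).mpr hP.isUnit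
  have htr : ((C * S⁻¹)ᵀ * (C * S⁻¹)).trace = (P⁻¹ * (Cᵀ * C)).trace := by
    rw [← hSS, mul_inv_rev, transpose_mul, transpose_nonsing_inv, hSt, Matrix.mul_assoc,
      trace_mul_comm S⁻¹, trace_mul_comm (S⁻¹ * S⁻¹)]
    simp only [Matrix.mul_assoc]
  have hN := (posSemidef_trace_smul_one_sub_transpose_mul_self (C * S⁻¹)).conjTranspose_mul_mul_same S
  rw [htr] at hN
  convert hN using 1
  rw [conjTranspose_eq_transpose_of_trivial, hSt, mul_sub, sub_mul, Matrix.mul_smul,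
    Matrix.smul_mul, mul_one, hSS, transpose_mul, transpose_nonsing_inv, hSt]
  simp only [Matrix.mul_assoc, nonsing_inv_mul S hS, Matrix.mul_one,
    mul_nonsing_inv_cancel_left _ _ hS]

lemma trace_eq_zero_of_forall_mem_spectrum_re_eq_zero (A : Matrix n n ℝ)
    (h : ∀ μ ∈ spectrum ℂ (A.map Complex.ofReal), μ.re = 0) : A.trace = 0 := by
  have hA : (A.trace : ℂ) = (A.map Complex.ofReal).trace :=
    AddMonoidHom.map_trace Complex.ofRealHom A
  rw [← Complex.ofReal_re A.trace, hA, trace_eq_sum_roots_charpoly]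
  change Complex.reAddGroupHom _ = 0
  rw [map_multiset_sum]
  refine Multiset.sum_eq_zero fun x hx ↦ ?_
  obtain ⟨μ, hμ, rfl⟩ := Multiset.mem_map.mp hx
  exact h μ (mem_spectrum_iff_isRoot_charpoly.mpr (Polynomial.isRoot_of_mem_roots hμ))

lemma trace_inv_mul_transpose_mul_add_mul {R : Type*} [CommRing R] {P : Matrix n n R}
    (hP : IsUnit P.det) (A : Matrix n n R) :
    (P⁻¹ * (Aᵀ * P + P * A)).trace = 2 * A.trace := by
  rw [Matrix.mul_add, trace_add, ← Matrix.mul_assoc, trace_mul_cycle, mul_nonsing_inv P hP,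
    Matrix.one_mul, trace_transpose, ← Matrix.mul_assoc, nonsing_inv_mul P hP, Matrix.one_mul,
    two_mul]

end Matrix

theorem stmt14_general {n : ℕ}
    (A B P : Matrix (Fin n) (Fin n) ℝ) (γ : ℝ)
    (hP : P.PosDef)
    (hare : Aᵀ * P + P * A - P * B * Bᵀ * P = -γ • P)
    (him : ∀ μ ∈ spectrum ℂ (A.map Complex.ofReal), μ.re = 0) :
    (((n : ℝ) * γ) • P - P * B * Bᵀ * P).PosSemidef := by
  have hPt : Pᵀ = P := hP.isHermitian
  have hPdet : IsUnit P.det := hP.isUnit.map detMonoidHom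
  have hM : P * B * Bᵀ * P = γ • P + (Aᵀ * P + P * A) := by
    rw [← sub_sub_cancel (Aᵀ * P + P * A) (P * B * Bᵀ * P), hare, neg_smul, sub_neg_eq_add,
      add_comm]
  have htr : (P⁻¹ * (P * B * Bᵀ * P)).trace = n * γ := by
    rw [hM, Matrix.mul_add, trace_add, Matrix.mul_smul, nonsing_inv_mul P hPdet, trace_smul,
      trace_one, trace_inv_mul_transpose_mul_add_mul hPdet,
      trace_eq_zero_of_forall_mem_spectrum_re_eq_zero A him]
    simp [mul_comm]
  have hgram : P * B * Bᵀ * P = (Bᵀ * P)ᵀ * (Bᵀ * P) := by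
    simp only [transpose_mul, transpose_transpose, hPt, Matrix.mul_assoc]
  simpa only [← hgram, htr] using hP.posSemidef_trace_inv_mul_smul_sub_transpose_mul_self (Bᵀ * P)

/-- If `P > 0` solves the parametric ARE `AᵀP + PA - PBBᵀP = -γP` and all
eigenvalues of `A` are purely imaginary, then `PBBᵀP ≤ nγ·P` in the Loewner
order, i.e. `nγ·P - PBBᵀP` is positive semidefinite. -/
theorem stmt14 {n : ℕ}
    (A B P : Matrix (Fin n) (Fin n) ℝ) (γ : ℝ) (hγ : 0 < γ)
    (hPsym : P.IsSymm) (hP : P.PosDef)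
    (hare : Aᵀ * P + P * A - P * B * Bᵀ * P = -γ • P)
    (him : ∀ μ ∈ spectrum ℂ (A.map Complex.ofReal), μ.re = 0) :
    (((n : ℝ) * γ) • P - P * B * Bᵀ * P).PosSemidef :=
  stmt14_general A B P γ hP hare him
end

section
/- Let M ∈ ℂ^{n×n} be Hurwitz, i.e., every eigenvalue of M has strictly negative real part. Then exp(tM) → 0 as t → ∞; consequently, every solution x of the linear ODE x′(t) = M x(t) satisfies lim_{t→∞} x(t) = 0. -/
/-!
On the generalized eigenspace of `M` for `μ`, the matrix `N = M - μ • 1` is nilpotent, so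
`exp (t • M) *ᵥ v = e^{tμ} ∑_{j<k} t^j / j! • N^j *ᵥ v` is an exponential times a polynomial in
`t`, which decays when `Re μ < 0`. The generalized eigenspaces span `ℂⁿ`, so `exp (t • M) *ᵥ v → 0`
for every `v`, and taking `v` to be the standard basis vectors gives `exp (t • M) → 0`.
By uniqueness of solutions of Lipschitz ODEs, a solution of `x' = M x` is `exp (t • M) *ᵥ x 0`.
-/

open Matrix Filter NormedSpace Set
open scoped Topology Nat

theorem Complex.tendsto_exp_mul_mul_pow_atTop_nhds_zero {μ : ℂ} (hμ : μ.re < 0) (j : ℕ) :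
    Tendsto (fun t : ℝ => Complex.exp (t * μ) * (t : ℂ) ^ j) atTop (𝓝 0) := by
  rw [tendsto_zero_iff_norm_tendsto_zero]
  refine (tendsto_rpow_mul_exp_neg_mul_atTop_nhds_zero j (-μ.re) (neg_pos.2 hμ)).congr' ?_
  filter_upwards [eventually_ge_atTop 0] with t ht
  rw [norm_mul, norm_pow, Complex.norm_exp, Complex.norm_real, Real.norm_of_nonneg ht,
    Real.rpow_natCast, mul_comm]
  simp [Complex.mul_re, mul_comm]

namespace Matrix

variable {m : Type*} [Fintype m] [DecidableEq m]

open scoped Matrix.Norms.Operator in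
theorem exp_algebraMap (c : ℂ) :
    exp (algebraMap ℂ (Matrix m m ℂ) c) = algebraMap ℂ _ (Complex.exp c) := by
  rw [Complex.exp_eq_exp_ℂ]
  exact (algebraMap_exp_comm c).symm

theorem exp_smul_mulVec_eq_sum (M : Matrix m m ℂ) {μ : ℂ} {k : ℕ} {v : m → ℂ}
    (hv : (M - μ • 1) ^ k *ᵥ v = 0) (z : ℂ) :
    exp (z • M) *ᵥ v =
      ∑ j ∈ Finset.range k, (Complex.exp (z * μ) * z ^ j / j !) • ((M - μ • 1) ^ j *ᵥ v) := by
  set N := M - μ • 1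
  have hsplit : z • M = algebraMap ℂ _ (z * μ) + z • N := by
    rw [Algebra.algebraMap_eq_smul_one, smul_sub, smul_smul, add_sub_cancel]
  have hexp : exp (z • M) = Complex.exp (z * μ) • exp (z • N) := by
    rw [hsplit, exp_add_of_commute _ _ (Algebra.commute_algebraMap_left _ _), exp_algebraMap,
      ← Algebra.smul_def]
  have hterm (j : ℕ) : ((j ! : ℂ)⁻¹ • (z • N) ^ j) *ᵥ v = (z ^ j / j !) • (N ^ j *ᵥ v) := by
    rw [smul_pow, smul_smul, smul_mulVec, inv_mul_eq_div]
  have hvanish : ∀ j ∉ Finset.range k, (z ^ j / j !) • (N ^ j *ᵥ v) = 0 := by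
    intro j hj
    obtain ⟨i, rfl⟩ := Nat.exists_eq_add_of_le' (not_lt.1 (Finset.mem_range.not.1 hj))
    rw [pow_add N, ← mulVec_mulVec, hv, mulVec_zero, smul_zero]
  have hcont : Continuous (mulVec.addMonoidHomLeft (m := m) v) :=
    continuous_id.matrix_mulVec continuous_const
  calc exp (z • M) *ᵥ v = Complex.exp (z * μ) • (exp (z • N) *ᵥ v) := by
        rw [hexp, smul_mulVec]
    _ = Complex.exp (z * μ) • ∑' j : ℕ, (z ^ j / j !) • (N ^ j *ᵥ v) := by
        rw [exp_eq_tsum ℂ]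
        simp_rw [← hterm]
        open scoped Matrix.Norms.Operator in
        exact congrArg _ ((expSeries_summable' (𝕂 := ℂ) (z • N)).map_tsum _ hcont)
    _ = _ := by
        rw [tsum_eq_sum hvanish, Finset.smul_sum]
        simp_rw [smul_smul, mul_div_assoc]

def stableSubspace (M : Matrix m m ℂ) : Submodule ℂ (m → ℂ) where
  carrier := {v | Tendsto (fun t : ℝ => exp (t • M) *ᵥ v) atTop (𝓝 0)}
  zero_mem' := by simpa only [Set.mem_ofPred_eq, mulVec_zero] using tendsto_const_nhds
  add_mem' hv hw := by simpa only [Set.mem_ofPred_eq, mulVec_add, add_zero] using hv.add hw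
  smul_mem' c v hv := by
    simpa only [Set.mem_ofPred_eq, mulVec_smul, smul_zero] using hv.const_smul c

theorem mem_stableSubspace_of_pow_sub_smul_mulVec_eq_zero (M : Matrix m m ℂ) {μ : ℂ}
    (hμ : μ.re < 0) {k : ℕ} {v : m → ℂ} (hv : (M - μ • 1) ^ k *ᵥ v = 0) :
    v ∈ M.stableSubspace := by
  show Tendsto _ _ _
  simp_rw [← Complex.coe_smul, M.exp_smul_mulVec_eq_sum hv]
  rw [← Finset.sum_const_zero (s := Finset.range k)]
  refine tendsto_finsetSum _ fun j _ => ?_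
  simpa [mul_div_assoc] using
    ((Complex.tendsto_exp_mul_mul_pow_atTop_nhds_zero hμ j).div_const (j ! : ℂ)).smul_const
      ((M - μ • 1) ^ j *ᵥ v)

theorem maxGenEigenspace_toLin'_le_stableSubspace (M : Matrix m m ℂ) {μ : ℂ} (hμ : μ.re < 0) :
    Module.End.maxGenEigenspace (toLin' M) μ ≤ M.stableSubspace := by
  intro v hv
  obtain ⟨k, hk⟩ := (Module.End.mem_maxGenEigenspace _ _ _).1 hv
  refine M.mem_stableSubspace_of_pow_sub_smul_mulVec_eq_zero hμ (k := k) ?_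
  have hlin : toLin' ((M - μ • 1) ^ k) = (toLin' M - μ • 1) ^ k := by
    simp only [toLin'_pow, map_sub, map_smul, toLin'_one, Module.End.one_eq_id]
  rwa [← toLin'_apply, hlin]

theorem stableSubspace_eq_top (M : Matrix m m ℂ) (hM : ∀ μ ∈ spectrum ℂ M, μ.re < 0) :
    M.stableSubspace = ⊤ := by
  rw [eq_top_iff, ← Module.End.iSup_maxGenEigenspace_eq_top (toLin' M), iSup_le_iff]
  intro μ
  by_cases hbot : Module.End.maxGenEigenspace (toLin' M) μ = ⊥
  · simp [hbot]
  have hμ : μ ∈ spectrum ℂ M := by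
    rw [← spectrum_toLin']
    exact (Module.End.HasUnifEigenvalue.lt zero_lt_one hbot).mem_spectrum
  exact M.maxGenEigenspace_toLin'_le_stableSubspace (hM μ hμ)

theorem tendsto_exp_smul_mulVec_atTop_nhds_zero (M : Matrix m m ℂ)
    (hM : ∀ μ ∈ spectrum ℂ M, μ.re < 0) (v : m → ℂ) :
    Tendsto (fun t : ℝ => exp (t • M) *ᵥ v) atTop (𝓝 0) :=
  show v ∈ M.stableSubspace from M.stableSubspace_eq_top hM ▸ Submodule.mem_top

theorem tendsto_exp_smul_atTop_nhds_zero (M : Matrix m m ℂ)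
    (hM : ∀ μ ∈ spectrum ℂ M, μ.re < 0) :
    Tendsto (fun t : ℝ => exp (t • M)) atTop (𝓝 0) := by
  refine tendsto_pi_nhds.2 fun i => tendsto_pi_nhds.2 fun j => ?_
  simpa only [mulVec_single_one, col_apply, Pi.zero_apply, zero_apply] using
    tendsto_pi_nhds.1 (M.tendsto_exp_smul_mulVec_atTop_nhds_zero hM (Pi.single j 1)) i

section RCLike

variable {𝕂 : Type*} [RCLike 𝕂]

theorem hasDerivAt_exp_smul_mulVec (M : Matrix m m 𝕂) (v : m → 𝕂) (t : ℝ) :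
    HasDerivAt (fun s : ℝ => exp (s • M) *ᵥ v) (M *ᵥ (exp (t • M) *ᵥ v)) t := by
  open scoped Matrix.Norms.Operator in
  have hexp := hasDerivAt_exp_smul_const' (𝕂 := ℝ) M t
  let L : Matrix m m 𝕂 →L[ℝ] m → 𝕂 :=
    (mulVec.addMonoidHomLeft v).toRealLinearMap (continuous_id.matrix_mulVec continuous_const)
  rw [mulVec_mulVec]
  exact L.hasFDerivAt.comp_hasDerivAt t hexp

theorem eq_exp_smul_mulVec_of_hasDerivAt (M : Matrix m m 𝕂) {x : ℝ → m → 𝕂}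
    (hx : ∀ t, HasDerivAt x (M *ᵥ x t) t) :
    x = fun t => exp (t • M) *ᵥ x 0 := by
  have hlip := (LinearMap.toContinuousLinearMap (mulVecLin M)).lipschitz.lipschitzOnWith
    (s := univ)
  refine ODE_solution_unique_univ (v := fun _ => (M *ᵥ ·)) (t₀ := 0) (fun _ => hlip)
    (fun t => ⟨hx t, mem_univ _⟩)
    (fun t => ⟨hasDerivAt_exp_smul_mulVec M (x 0) t, mem_univ _⟩) ?_
  simp

end RCLike

end Matrix

/-- If `M` is Hurwitz then `exp(tM) → 0` as `t → ∞`, and every solution of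
`x' = Mx` tends to `0`. -/
theorem stmt17 {n : ℕ}
    (M : Matrix (Fin n) (Fin n) ℂ)
    (hM : ∀ μ ∈ spectrum ℂ M, μ.re < 0) :
    Tendsto (fun t : ℝ => NormedSpace.exp (t • M)) atTop
        (𝓝 (0 : Matrix (Fin n) (Fin n) ℂ)) ∧
    ∀ x : ℝ → Fin n → ℂ,
      (∀ t : ℝ, HasDerivAt x (M *ᵥ x t) t) →
      Tendsto x atTop (𝓝 0) := by
  refine ⟨M.tendsto_exp_smul_atTop_nhds_zero hM, fun x hx => ?_⟩
  rw [M.eq_exp_smul_mulVec_of_hasDerivAt hx]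
  exact M.tendsto_exp_smul_mulVec_atTop_nhds_zero hM (x 0)
end
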